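/- arXiv:1708.02235 — 8 statements merged into one kernel-verified Lean document; each statement's English description precedes it below -/
import Mathlib

section
/- Let E be a real Banach space, P : E → E a continuous linear map, S, T : ℝ → (E → E) two families of continuous linear operators such that for every x ∈ E the maps t ↦ S(t)x and t ↦ T(t)x are continuous, and suppose there are constants M, M_Q > 0 and ω, ω_Q ∈ ℝ with ‖S(t)‖ ≤ M·exp(ω·t) and ‖T(t)‖ ≤ M_Q·exp(ω_Q·t) for all t ≥ 0. Then for every v ∈ E and every t ≥ 0, the error of the t-model approximation of the memory integral satisfies ‖∫₀ᵗ P(S(s)(P(T(t−s)v))) ds − t·P(S(t)(P v))‖ ≤ C₁·((exp(ω_Q·t) − exp(ω·t))/(ω_Q − ω) + t·exp(ω·t)/M_Q) if ω ≠ ω_Q, and ‖∫₀ᵗ P(S(s)(P(T(t−s)v))) ds − t·P(S(t)(P v))‖ ≤ C₁·((M_Q + 1)/M_Q)·t·exp(ω·t) if ω = ω_Q, where C₁ = M·M_Q·‖P‖²·‖v‖. -/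
/-!
The memory integrand is bounded pointwise by `M MQ ‖P‖² ‖v‖ e^{ωs} e^{ωQ(t-s)}` and the t-model
term by `M ‖P‖² ‖v‖ t e^{ωt}`, so the triangle inequality reduces the error to the exponential
convolution `∫₀ᵗ e^{ωs} e^{ωQ(t-s)} ds`, which equals `(e^{ωQ t} - e^{ωt}) / (ωQ - ω)` when
`ω ≠ ωQ` and `t e^{ωt}` when `ω = ωQ`.
-/

open MeasureTheory intervalIntegral

theorem integral_exp_mul_exp_sub {a b : ℝ} (hab : a ≠ b) (t : ℝ) :
    ∫ s in (0:ℝ)..t, Real.exp (a * s) * Real.exp (b * (t - s)) =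
      (Real.exp (b * t) - Real.exp (a * t)) / (b - a) := by
  have hsplit : ∀ s, Real.exp (a * s) * Real.exp (b * (t - s)) =
      Real.exp (b * t) * Real.exp ((a - b) * s) := fun s => by
    rw [← Real.exp_add, ← Real.exp_add]; ring_nf
  have hexp : Real.exp (b * t) * Real.exp ((a - b) * t) = Real.exp (a * t) := by
    rw [← Real.exp_add]; ring_nf
  have hab' : a - b ≠ 0 := sub_ne_zero.mpr hab
  simp_rw [hsplit, intervalIntegral.integral_const_mul,
    integral_comp_mul_left (fun u => Real.exp u) hab', integral_exp, mul_zero, Real.exp_zero,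
    smul_eq_mul]
  field_simp
  rw [mul_comm t (a - b), mul_comm t a]
  linear_combination (b - a) * hexp

theorem integral_exp_mul_exp_sub_self (a t : ℝ) :
    ∫ s in (0:ℝ)..t, Real.exp (a * s) * Real.exp (a * (t - s)) = t * Real.exp (a * t) := by
  simp_rw [← Real.exp_add, mul_sub, add_sub_cancel, intervalIntegral.integral_const, sub_zero,
    smul_eq_mul]

section

variable {E : Type*} [NormedAddCommGroup E] [NormedSpace ℝ E]

theorem ContinuousLinearMap.norm_apply_apply_apply_apply_le (P S T : E →L[ℝ] E) (v : E)
    {a b : ℝ} (hS : ‖S‖ ≤ a) (hT : ‖T‖ ≤ b) :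
    ‖P (S (P (T v)))‖ ≤ a * b * ‖P‖ ^ 2 * ‖v‖ := by
  have ha : 0 ≤ a := (norm_nonneg S).trans hS
  calc ‖P (S (P (T v)))‖ ≤ ‖P‖ * (a * (‖P‖ * (b * ‖v‖))) := by
        refine (P.le_opNorm _).trans (mul_le_mul_of_nonneg_left ?_ (norm_nonneg P))
        refine (S.le_of_opNorm_le hS _).trans (mul_le_mul_of_nonneg_left ?_ ha)
        exact (P.le_opNorm _).trans (mul_le_mul_of_nonneg_left (T.le_of_opNorm_le hT _)
          (norm_nonneg P))
    _ = a * b * ‖P‖ ^ 2 * ‖v‖ := by ring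

variable (P : E →L[ℝ] E) (S T : ℝ → (E →L[ℝ] E)) {M MQ ω ωQ : ℝ}

theorem norm_memory_integral_le (hS : ∀ t : ℝ, 0 ≤ t → ‖S t‖ ≤ M * Real.exp (ω * t))
    (hT : ∀ t : ℝ, 0 ≤ t → ‖T t‖ ≤ MQ * Real.exp (ωQ * t)) (v : E) {t : ℝ} (ht : 0 ≤ t) :
    ‖∫ s in (0:ℝ)..t, P (S s (P (T (t - s) v)))‖ ≤
      M * MQ * ‖P‖ ^ 2 * ‖v‖ * ∫ s in (0:ℝ)..t, Real.exp (ω * s) * Real.exp (ωQ * (t - s)) := by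
  rw [← intervalIntegral.integral_const_mul]
  refine norm_integral_le_of_norm_le ht (ae_of_all _ fun s hs => ?_)
    (Continuous.intervalIntegrable (by fun_prop) _ _)
  calc ‖P (S s (P (T (t - s) v)))‖
      ≤ M * Real.exp (ω * s) * (MQ * Real.exp (ωQ * (t - s))) * ‖P‖ ^ 2 * ‖v‖ :=
        P.norm_apply_apply_apply_apply_le _ _ v (hS s hs.1.le) (hT _ (sub_nonneg.mpr hs.2))
    _ = M * MQ * ‖P‖ ^ 2 * ‖v‖ * (Real.exp (ω * s) * Real.exp (ωQ * (t - s))) := by ring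

theorem norm_t_model_le (hS : ∀ t : ℝ, 0 ≤ t → ‖S t‖ ≤ M * Real.exp (ω * t)) (v : E) {t : ℝ}
    (ht : 0 ≤ t) : ‖t • P (S t (P v))‖ ≤ M * ‖P‖ ^ 2 * ‖v‖ * (t * Real.exp (ω * t)) := by
  have h := P.norm_apply_apply_apply_apply_le (S t) (ContinuousLinearMap.id ℝ E) v (hS t ht)
    ContinuousLinearMap.norm_id_le
  rw [norm_smul, Real.norm_of_nonneg ht]
  calc t * ‖P (S t (P v))‖ ≤ t * (M * Real.exp (ω * t) * 1 * ‖P‖ ^ 2 * ‖v‖) :=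
        mul_le_mul_of_nonneg_left h ht
    _ = M * ‖P‖ ^ 2 * ‖v‖ * (t * Real.exp (ω * t)) := by ring

theorem norm_memory_integral_sub_t_model_le
    (hS : ∀ t : ℝ, 0 ≤ t → ‖S t‖ ≤ M * Real.exp (ω * t))
    (hT : ∀ t : ℝ, 0 ≤ t → ‖T t‖ ≤ MQ * Real.exp (ωQ * t)) (hMQ : 0 < MQ) (v : E) {t : ℝ}
    (ht : 0 ≤ t) :
    ‖(∫ s in (0:ℝ)..t, P (S s (P (T (t - s) v)))) - t • P (S t (P v))‖ ≤
      M * MQ * ‖P‖ ^ 2 * ‖v‖ *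
        ((∫ s in (0:ℝ)..t, Real.exp (ω * s) * Real.exp (ωQ * (t - s))) +
          t * Real.exp (ω * t) / MQ) := by
  calc _ ≤ ‖∫ s in (0:ℝ)..t, P (S s (P (T (t - s) v)))‖ + ‖t • P (S t (P v))‖ := norm_sub_le _ _
    _ ≤ M * MQ * ‖P‖ ^ 2 * ‖v‖ *
          (∫ s in (0:ℝ)..t, Real.exp (ω * s) * Real.exp (ωQ * (t - s))) +
        M * ‖P‖ ^ 2 * ‖v‖ * (t * Real.exp (ω * t)) :=
      add_le_add (norm_memory_integral_le P S T hS hT v ht) (norm_t_model_le P S hS v ht)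
    _ = _ := by field_simp

end

theorem mz_t_model_error_general
    {E : Type*} [NormedAddCommGroup E] [NormedSpace ℝ E]
    (P : E →L[ℝ] E) (S T : ℝ → (E →L[ℝ] E))
    (M MQ : ℝ) (hMQ : 0 < MQ) (ω ωQ : ℝ)
    (hS : ∀ t : ℝ, 0 ≤ t → ‖S t‖ ≤ M * Real.exp (ω * t))
    (hT : ∀ t : ℝ, 0 ≤ t → ‖T t‖ ≤ MQ * Real.exp (ωQ * t))
    (v : E) (t : ℝ) (ht : 0 ≤ t) :
    (ω ≠ ωQ →
      ‖(∫ s in (0:ℝ)..t, P (S s (P (T (t - s) v)))) - t • P (S t (P v))‖ ≤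
        (M * MQ * ‖P‖ ^ 2 * ‖v‖) *
          ((Real.exp (ωQ * t) - Real.exp (ω * t)) / (ωQ - ω) + t * Real.exp (ω * t) / MQ)) ∧
    (ω = ωQ →
      ‖(∫ s in (0:ℝ)..t, P (S s (P (T (t - s) v)))) - t • P (S t (P v))‖ ≤
        (M * MQ * ‖P‖ ^ 2 * ‖v‖) * ((MQ + 1) / MQ) * t * Real.exp (ω * t)) := by
  have h := norm_memory_integral_sub_t_model_le P S T hS hT hMQ v ht
  refine ⟨fun hne => ?_, ?_⟩
  · rwa [integral_exp_mul_exp_sub hne] at h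
  · rintro rfl
    rw [integral_exp_mul_exp_sub_self] at h
    refine h.trans_eq ?_
    field_simp

/-- **Error bound for the t-model** (Theorem 3.2, abstract form). The error of
the t-model approximation `t • P S(t) P v` of the Mori–Zwanzig memory integral
`∫₀ᵗ P S(s) P T(t-s) v ds`. -/
theorem mz_t_model_error
    {E : Type*} [NormedAddCommGroup E] [NormedSpace ℝ E] [CompleteSpace E]
    (P : E →L[ℝ] E) (S T : ℝ → (E →L[ℝ] E))
    (hScont : ∀ x : E, Continuous fun t : ℝ => S t x)
    (hTcont : ∀ x : E, Continuous fun t : ℝ => T t x)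
    (M MQ : ℝ) (hM : 0 < M) (hMQ : 0 < MQ) (ω ωQ : ℝ)
    (hS : ∀ t : ℝ, 0 ≤ t → ‖S t‖ ≤ M * Real.exp (ω * t))
    (hT : ∀ t : ℝ, 0 ≤ t → ‖T t‖ ≤ MQ * Real.exp (ωQ * t))
    (v : E) (t : ℝ) (ht : 0 ≤ t) :
    (ω ≠ ωQ →
      ‖(∫ s in (0:ℝ)..t, P (S s (P (T (t - s) v)))) - t • P (S t (P v))‖ ≤
        (M * MQ * ‖P‖ ^ 2 * ‖v‖) *
          ((Real.exp (ωQ * t) - Real.exp (ω * t)) / (ωQ - ω) + t * Real.exp (ω * t) / MQ)) ∧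
    (ω = ωQ →
      ‖(∫ s in (0:ℝ)..t, P (S s (P (T (t - s) v)))) - t • P (S t (P v))‖ ≤
        (M * MQ * ‖P‖ ^ 2 * ‖v‖) * ((MQ + 1) / MQ) * t * Real.exp (ω * t)) :=
  mz_t_model_error_general P S T M MQ hMQ ω ωQ hS hT v t ht
end

section
/- Let E be a real Banach space, P : E → E a continuous linear map, S, T : ℝ → (E → E) two families of continuous linear operators such that for every x ∈ E the maps t ↦ S(t)x and t ↦ T(t)x are continuous, and suppose there are constants M, M_Q > 0 and ω, ω_Q ∈ ℝ with ‖S(t)‖ ≤ M·exp(ω·t) and ‖T(t)‖ ≤ M_Q·exp(ω_Q·t) for all t ≥ 0. Then for every v ∈ E and all 0 ≤ Δt ≤ t, the error of the short-memory approximation satisfies ‖∫₀ᵗ P(S(s)(P(T(t−s)v))) ds − ∫_{t−Δt}^{t} P(S(s)(P(T(t−s)v))) ds‖ ≤ C₁·(t−Δt)·exp(ω_Q·t) if ω = ω_Q, and ‖∫₀ᵗ P(S(s)(P(T(t−s)v))) ds − ∫_{t−Δt}^{t} P(S(s)(P(T(t−s)v))) ds‖ ≤ C₁·exp(ω_Q·Δt)·(exp(ω·(t−Δt))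 − exp(ω_Q·(t−Δt)))/(ω − ω_Q) if ω ≠ ω_Q, where C₁ = M·M_Q·‖P‖²·‖v‖. -/
open MeasureTheory intervalIntegral Filter

/-!
Subtracting the short-memory integral leaves the memory integral over `[0, t - Δt]`, where the
integrand is bounded by `C₁ e^{ωs} e^{ω_Q (t - s)}`. Integrating this bound gives
`(t - Δt) e^{ω_Q t}` when `ω = ω_Q`, and `e^{ω_Q Δt} (e^{ω(t-Δt)} - e^{ω_Q(t-Δt)}) / (ω - ω_Q)`
otherwise. Splitting the integral at `t - Δt` needs integrability, which comes from continuity of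
the integrand: `S` is strongly continuous and `‖S s‖` is uniformly bounded on `[0, t]`.
-/

open Set Topology Real

section StronglyContinuous

variable {X 𝕜 E F : Type*} [TopologicalSpace X] [NontriviallyNormedField 𝕜]
  [SeminormedAddCommGroup E] [NormedSpace 𝕜 E] [SeminormedAddCommGroup F] [NormedSpace 𝕜 F]

theorem ContinuousOn.clm_apply_of_strongly_continuous {S : X → E →L[𝕜] F} {g : X → E}
    {s : Set X} {K : ℝ} (hS : ∀ x, ContinuousOn (fun t => S t x) s)
    (hSK : ∀ t ∈ s, ‖S t‖ ≤ K) (hg : ContinuousOn g s) :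
    ContinuousOn (fun t => S t (g t)) s := by
  intro t₀ ht₀
  have hsmall : Tendsto (fun t => S t (g t - g t₀)) (𝓝[s] t₀) (𝓝 0) := by
    refine squeeze_zero_norm' ?_ (a := fun t => K * ‖g t - g t₀‖) ?_
    · filter_upwards [self_mem_nhdsWithin] with t ht
      exact (S t).le_of_opNorm_le (hSK t ht) _
    · simpa using
        (((hg t₀ ht₀).sub (continuousWithinAt_const (b := g t₀))).norm.const_mul K).tendsto
  show Tendsto _ _ _
  simpa only [← map_add, sub_add_cancel, zero_add] using hsmall.add (hS (g t₀) t₀ ht₀)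

end StronglyContinuous

theorem ContinuousLinearMap.norm_apply_apply_apply_apply_le_s2 {E : Type*}
    [SeminormedAddCommGroup E] [NormedSpace ℝ E] (P A B : E →L[ℝ] E) (v : E) {M MQ a b : ℝ}
    (hA : ‖A‖ ≤ M * a) (hB : ‖B‖ ≤ MQ * b) :
    ‖P (A (P (B v)))‖ ≤ M * MQ * ‖P‖ ^ 2 * ‖v‖ * (a * b) :=
  calc ‖P (A (P (B v)))‖ ≤ ‖P‖ * (‖A‖ * (‖P‖ * (‖B‖ * ‖v‖))) :=
        P.le_opNorm_of_le (A.le_opNorm_of_le (P.le_opNorm_of_le (B.le_opNorm v)))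
    _ ≤ ‖P‖ * (M * a * (‖P‖ * (MQ * b * ‖v‖))) := by
        gcongr
        exact (norm_nonneg _).trans hA
    _ = M * MQ * ‖P‖ ^ 2 * ‖v‖ * (a * b) := by ring

theorem integral_exp_mul_exp_mul_sub_self (ω t τ : ℝ) :
    ∫ s in (0:ℝ)..τ, exp (ω * s) * exp (ω * (t - s)) = τ * exp (ω * t) := by
  simp [← exp_add, mul_sub]

theorem integral_exp_mul_exp_mul_sub {ω ωQ : ℝ} (h : ω ≠ ωQ) (t τ : ℝ) :
    ∫ s in (0:ℝ)..τ, exp (ω * s) * exp (ωQ * (t - s)) =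
      exp (ωQ * (t - τ)) * (exp (ω * τ) - exp (ωQ * τ)) / (ω - ωQ) := by
  have hω : ω - ωQ ≠ 0 := sub_ne_zero.2 h
  have hderiv : ∀ s, HasDerivAt (fun s => exp (ω * s) * exp (ωQ * (t - s)) / (ω - ωQ))
      (exp (ω * s) * exp (ωQ * (t - s))) s := by
    intro s
    refine ((((hasDerivAt_id' s).const_mul ω).exp.mul
      (((hasDerivAt_id' s).const_sub t).const_mul ωQ).exp).div_const (ω - ωQ)).congr_deriv ?_
    field_simp
    ring
  rw [integral_eq_sub_of_hasDerivAt (fun s _ => hderiv s)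
    ((by fun_prop : Continuous _).intervalIntegrable _ _)]
  rw [mul_zero, exp_zero, sub_zero, one_mul, show ωQ * t = ωQ * (t - τ) + ωQ * τ by ring, exp_add]
  field_simp

theorem mz_short_memory_error_general
    {E : Type*} [NormedAddCommGroup E] [NormedSpace ℝ E]
    (P : E →L[ℝ] E) (S T : ℝ → (E →L[ℝ] E))
    (hScont : ∀ x : E, Continuous fun t : ℝ => S t x)
    (hTcont : ∀ x : E, Continuous fun t : ℝ => T t x)
    (M MQ : ℝ) (ω ωQ : ℝ)
    (hS : ∀ t : ℝ, 0 ≤ t → ‖S t‖ ≤ M * Real.exp (ω * t))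
    (hT : ∀ t : ℝ, 0 ≤ t → ‖T t‖ ≤ MQ * Real.exp (ωQ * t))
    (v : E) (t Δt : ℝ) (hΔt : 0 ≤ Δt) (hΔtt : Δt ≤ t) :
    (ω = ωQ →
      ‖(∫ s in (0:ℝ)..t, P (S s (P (T (t - s) v)))) -
          ∫ s in (t - Δt)..t, P (S s (P (T (t - s) v)))‖ ≤
        (M * MQ * ‖P‖ ^ 2 * ‖v‖) * (t - Δt) * Real.exp (ωQ * t)) ∧
    (ω ≠ ωQ →
      ‖(∫ s in (0:ℝ)..t, P (S s (P (T (t - s) v)))) -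
          ∫ s in (t - Δt)..t, P (S s (P (T (t - s) v)))‖ ≤
        (M * MQ * ‖P‖ ^ 2 * ‖v‖) * Real.exp (ωQ * Δt) *
          (Real.exp (ω * (t - Δt)) - Real.exp (ωQ * (t - Δt))) / (ω - ωQ)) := by
  set f := fun s => P (S s (P (T (t - s) v)))
  set C := M * MQ * ‖P‖ ^ 2 * ‖v‖
  have hτ : 0 ≤ t - Δt := sub_nonneg.2 hΔtt
  have hM : 0 ≤ M := by simpa using (norm_nonneg _).trans (hS 0 le_rfl)
  have hSK : ∀ s ∈ Icc 0 t, ‖S s‖ ≤ M * exp (|ω| * t) := fun s hs =>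
    (hS s hs.1).trans (by gcongr; exacts [hs.1, le_abs_self ω, hs.2])
  have hf : ContinuousOn f (Icc 0 t) :=
    P.continuous.comp_continuousOn <| ContinuousOn.clm_apply_of_strongly_continuous
      (fun x => (hScont x).continuousOn) hSK (by fun_prop)
  have hdiff : (∫ s in (0:ℝ)..t, f s) - ∫ s in (t - Δt)..t, f s = ∫ s in (0:ℝ)..(t - Δt), f s :=
    sub_eq_of_eq_add (integral_add_adjacent_intervals
      ((hf.mono (Icc_subset_Icc_right (by linarith))).intervalIntegrable_of_Icc hτ)
      ((hf.mono (Icc_subset_Icc_left hτ)).intervalIntegrable_of_Icc (by linarith))).symm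
  have hbound : ∀ s ∈ Ioc 0 (t - Δt), ‖f s‖ ≤ C * (exp (ω * s) * exp (ωQ * (t - s))) :=
    fun s hs => P.norm_apply_apply_apply_apply_le_s2 _ _ v (hS s hs.1.le) (hT _ (by linarith [hs.2]))
  have hest : ‖∫ s in (0:ℝ)..(t - Δt), f s‖ ≤
      C * ∫ s in (0:ℝ)..(t - Δt), exp (ω * s) * exp (ωQ * (t - s)) :=
    (norm_integral_le_of_norm_le hτ (ae_of_all _ hbound)
      ((by fun_prop : Continuous _).intervalIntegrable _ _)).trans_eq (integral_const_mul _ _)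
  rw [hdiff]
  refine ⟨fun hω => ?_, fun hω => ?_⟩
  · subst hω
    rwa [integral_exp_mul_exp_mul_sub_self, ← mul_assoc] at hest
  · rwa [integral_exp_mul_exp_mul_sub hω, sub_sub_cancel, ← mul_div_assoc, ← mul_assoc] at hest

/-- **Error bound for the short-memory approximation** (Theorem 3.3, abstract
form). The integration interval `[0,t]` of the Mori–Zwanzig memory integral is
replaced by `[t-Δt, t]` with memory length `Δt`. -/
theorem mz_short_memory_error
    {E : Type*} [NormedAddCommGroup E] [NormedSpace ℝ E] [CompleteSpace E]
    (P : E →L[ℝ] E) (S T : ℝ → (E →L[ℝ] E))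
    (hScont : ∀ x : E, Continuous fun t : ℝ => S t x)
    (hTcont : ∀ x : E, Continuous fun t : ℝ => T t x)
    (M MQ : ℝ) (hM : 0 < M) (hMQ : 0 < MQ) (ω ωQ : ℝ)
    (hS : ∀ t : ℝ, 0 ≤ t → ‖S t‖ ≤ M * Real.exp (ω * t))
    (hT : ∀ t : ℝ, 0 ≤ t → ‖T t‖ ≤ MQ * Real.exp (ωQ * t))
    (v : E) (t Δt : ℝ) (hΔt : 0 ≤ Δt) (hΔtt : Δt ≤ t) :
    (ω = ωQ →
      ‖(∫ s in (0:ℝ)..t, P (S s (P (T (t - s) v)))) -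
          ∫ s in (t - Δt)..t, P (S s (P (T (t - s) v)))‖ ≤
        (M * MQ * ‖P‖ ^ 2 * ‖v‖) * (t - Δt) * Real.exp (ωQ * t)) ∧
    (ω ≠ ωQ →
      ‖(∫ s in (0:ℝ)..t, P (S s (P (T (t - s) v)))) -
          ∫ s in (t - Δt)..t, P (S s (P (T (t - s) v)))‖ ≤
        (M * MQ * ‖P‖ ^ 2 * ‖v‖) * Real.exp (ωQ * Δt) *
          (Real.exp (ω * (t - Δt)) - Real.exp (ωQ * (t - Δt))) / (ω - ωQ)) :=
  mz_short_memory_error_general P S T hScont hTcont M MQ ω ωQ hS hT v t Δt hΔt hΔtt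
end

section
/- Let E be a real Banach space, P : E → E a continuous linear map, S, T : ℝ → (E → E) two families of continuous linear operators such that for every x ∈ E the maps t ↦ S(t)x and t ↦ T(t)x are continuous, and suppose there are constants M, M_Q > 0 and ω, ω_Q ∈ ℝ with ‖S(t)‖ ≤ M·exp(ω·t) and ‖T(t)‖ ≤ M_Q·exp(ω_Q·t) for all t ≥ 0. Fix T > 0 and an integer p ≥ 1, and set A₁ = max(1, exp(T·(ω − ω_Q))) and A₂ = max(1, exp(T·ω_Q)). Then for every v ∈ E and every t with 0 ≤ t ≤ T, the p-th order H-model truncation error of the memory integral satisfies ‖∫₀ᵗ ((t−σ)^{p−1}/(p−1)!) · (∫₀^σ P(S(s)(P(T(σ−s)v))) ds) dσ‖ ≤ M·M_Q·‖P‖²·A₁·A₂·‖v‖·t^{p+1}/(p+1)!. -/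
/-!
On `0 ≤ s ≤ σ ≤ t ≤ T` the two growth bounds combine as
`e^{ωs} e^{ω_Q(σ-s)} = e^{(ω-ω_Q)s} e^{ω_Q σ} ≤ A₁ A₂`, so the inner integral is at most `C σ`
with `C = M M_Q ‖P‖² A₁ A₂ ‖v‖`, and integrating `C σ` against the kernel gives
`C t^(p+1)/(p+1)!`.
-/

open intervalIntegral Filter

lemma Real.exp_mul_le_max_one_exp {c s T : ℝ} (hs : 0 ≤ s) (hsT : s ≤ T) :
    Real.exp (c * s) ≤ max 1 (Real.exp (T * c)) := by
  rcases le_or_gt c 0 with hc | hc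
  · exact le_max_of_le_left (Real.exp_le_one_iff.mpr (mul_nonpos_of_nonpos_of_nonneg hc hs))
  · exact le_max_of_le_right (Real.exp_le_exp.mpr (by rw [mul_comm T]; gcongr))

lemma Real.exp_mul_mul_exp_mul_sub_le {ω ωQ s σ T : ℝ} (hs : 0 ≤ s) (hsσ : s ≤ σ) (hσT : σ ≤ T) :
    Real.exp (ω * s) * Real.exp (ωQ * (σ - s)) ≤
      max 1 (Real.exp (T * (ω - ωQ))) * max 1 (Real.exp (T * ωQ)) := by
  have hsplit : ω * s + ωQ * (σ - s) = (ω - ωQ) * s + ωQ * σ := by ring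
  rw [← Real.exp_add, hsplit, Real.exp_add]
  exact mul_le_mul (exp_mul_le_max_one_exp hs (hsσ.trans hσT))
    (exp_mul_le_max_one_exp (hs.trans hsσ) hσT) (Real.exp_pos _).le (by positivity)

lemma integral_sub_pow_div_factorial_mul_id (n : ℕ) (t : ℝ) :
    ∫ σ in (0:ℝ)..t, (t - σ) ^ n / n.factorial * σ = t ^ (n + 2) / (n + 2).factorial := by
  have hpow : ∀ m : ℕ, ∫ σ in (0:ℝ)..t, (t - σ) ^ m = t ^ (m + 1) / (m + 1) := fun m => by
    simp [integral_comp_sub_left (fun x => x ^ m) t, integral_pow]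
  have hsplit : ∀ σ : ℝ, (t - σ) ^ n / n.factorial * σ =
      (t / n.factorial) * (t - σ) ^ n - (t - σ) ^ (n + 1) / n.factorial := fun σ => by ring
  simp_rw [hsplit]
  rw [integral_sub (Continuous.intervalIntegrable (by fun_prop) _ _)
    (Continuous.intervalIntegrable (by fun_prop) _ _), integral_const_mul, integral_div, hpow, hpow]
  simp only [Nat.factorial_succ, Nat.cast_mul]
  push_cast
  field_simp
  ring

lemma norm_integral_sub_pow_div_factorial_smul_le {E : Type*} [NormedAddCommGroup E]
    [NormedSpace ℝ E] {f : ℝ → E} {C t : ℝ} (n : ℕ) (ht : 0 ≤ t)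
    (hf : ∀ σ ∈ Set.Ioc 0 t, ‖f σ‖ ≤ C * σ) :
    ‖∫ σ in (0:ℝ)..t, ((t - σ) ^ n / n.factorial) • f σ‖ ≤
      C * t ^ (n + 2) / (n + 2).factorial := by
  have hbound : ∀ σ ∈ Set.Ioc 0 t,
      ‖((t - σ) ^ n / n.factorial) • f σ‖ ≤ C * ((t - σ) ^ n / n.factorial * σ) := by
    intro σ hσ
    have hkernel : 0 ≤ (t - σ) ^ n / n.factorial := by
      have : 0 ≤ t - σ := sub_nonneg.mpr hσ.2
      positivity
    rw [norm_smul, Real.norm_of_nonneg hkernel, mul_left_comm]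
    exact mul_le_mul_of_nonneg_left (hf σ hσ) hkernel
  calc _ ≤ ∫ σ in (0:ℝ)..t, C * ((t - σ) ^ n / n.factorial * σ) :=
        norm_integral_le_of_norm_le ht (Eventually.of_forall hbound)
          (Continuous.intervalIntegrable (by fun_prop) _ _)
    _ = C * t ^ (n + 2) / (n + 2).factorial := by
        rw [integral_const_mul, integral_sub_pow_div_factorial_mul_id, mul_div_assoc]

lemma ContinuousLinearMap.norm_apply_apply_apply_apply_le_s3 {𝕜 E F G H K : Type*}
    [NontriviallyNormedField 𝕜] [NormedAddCommGroup E] [NormedSpace 𝕜 E] [NormedAddCommGroup F]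
    [NormedSpace 𝕜 F] [NormedAddCommGroup G] [NormedSpace 𝕜 G] [NormedAddCommGroup H]
    [NormedSpace 𝕜 H] [NormedAddCommGroup K] [NormedSpace 𝕜 K]
    (A : H →L[𝕜] K) (B : G →L[𝕜] H) (C : F →L[𝕜] G) (D : E →L[𝕜] F) (x : E) :
    ‖A (B (C (D x)))‖ ≤ ‖A‖ * ‖B‖ * ‖C‖ * ‖D‖ * ‖x‖ := by
  calc ‖A (B (C (D x)))‖ ≤ ‖A‖ * (‖B‖ * (‖C‖ * (‖D‖ * ‖x‖))) :=
        A.le_opNorm_of_le (B.le_opNorm_of_le (C.le_opNorm_of_le (D.le_opNorm x)))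
    _ = ‖A‖ * ‖B‖ * ‖C‖ * ‖D‖ * ‖x‖ := by ring

theorem mz_H_model_accuracy_general
    {E : Type*} [NormedAddCommGroup E] [NormedSpace ℝ E]
    (P : E →L[ℝ] E) (S T : ℝ → (E →L[ℝ] E))
    (M MQ : ℝ) (hM : 0 < M) (hMQ : 0 < MQ) (ω ωQ : ℝ)
    (hS : ∀ t : ℝ, 0 ≤ t → ‖S t‖ ≤ M * Real.exp (ω * t))
    (hT : ∀ t : ℝ, 0 ≤ t → ‖T t‖ ≤ MQ * Real.exp (ωQ * t))
    (Tf : ℝ) (p : ℕ) (hp : 1 ≤ p)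
    (A₁ A₂ : ℝ) (hA₁ : A₁ = max 1 (Real.exp (Tf * (ω - ωQ))))
    (hA₂ : A₂ = max 1 (Real.exp (Tf * ωQ)))
    (v : E) (t : ℝ) (ht0 : 0 ≤ t) (htT : t ≤ Tf) :
    ‖∫ σ in (0:ℝ)..t, ((t - σ) ^ (p - 1) / (Nat.factorial (p - 1) : ℝ)) •
        (∫ s in (0:ℝ)..σ, P (S s (P (T (σ - s) v))))‖ ≤
      M * MQ * ‖P‖ ^ 2 * A₁ * A₂ * ‖v‖ * t ^ (p + 1) / (Nat.factorial (p + 1) : ℝ) := by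
  obtain ⟨n, rfl⟩ : ∃ n, p = n + 1 := ⟨p - 1, (Nat.succ_pred_eq_of_pos hp).symm⟩
  have hintegrand : ∀ σ ≤ Tf, ∀ s ∈ Set.Ioc 0 σ,
      ‖P (S s (P (T (σ - s) v)))‖ ≤ M * MQ * ‖P‖ ^ 2 * A₁ * A₂ * ‖v‖ := by
    rintro σ hσT s ⟨hs, hsσ⟩
    have hSs := hS s hs.le
    have hTs := hT (σ - s) (sub_nonneg.mpr hsσ)
    have hexp := Real.exp_mul_mul_exp_mul_sub_le (ω := ω) (ωQ := ωQ) hs.le hsσ hσT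
    rw [← hA₁, ← hA₂] at hexp
    calc _ ≤ ‖P‖ * ‖S s‖ * ‖P‖ * ‖T (σ - s)‖ * ‖v‖ := P.norm_apply_apply_apply_apply_le_s3 _ _ _ v
      _ ≤ ‖P‖ * (M * Real.exp (ω * s)) * ‖P‖ * (MQ * Real.exp (ωQ * (σ - s))) * ‖v‖ := by gcongr
      _ = M * MQ * ‖P‖ ^ 2 * (Real.exp (ω * s) * Real.exp (ωQ * (σ - s))) * ‖v‖ := by ring
      _ ≤ M * MQ * ‖P‖ ^ 2 * (A₁ * A₂) * ‖v‖ := by gcongr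
      _ = M * MQ * ‖P‖ ^ 2 * A₁ * A₂ * ‖v‖ := by ring
  refine norm_integral_sub_pow_div_factorial_smul_le n ht0 fun σ hσ => ?_
  have hinner := norm_integral_le_of_norm_le_const fun s hs =>
    hintegrand σ (hσ.2.trans htT) s (by rwa [Set.uIoc_of_le hσ.1.le] at hs)
  rwa [sub_zero, abs_of_pos hσ.1] at hinner

/-- **Accuracy of the H-model** (Theorem 3.4, abstract form). Bound on the
p-th order H-model truncation error of the Mori–Zwanzig memory integral,
written via Cauchy's formula for repeated integration. -/
theorem mz_H_model_accuracy
    {E : Type*} [NormedAddCommGroup E] [NormedSpace ℝ E] [CompleteSpace E]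
    (P : E →L[ℝ] E) (S T : ℝ → (E →L[ℝ] E))
    (hScont : ∀ x : E, Continuous fun t : ℝ => S t x)
    (hTcont : ∀ x : E, Continuous fun t : ℝ => T t x)
    (M MQ : ℝ) (hM : 0 < M) (hMQ : 0 < MQ) (ω ωQ : ℝ)
    (hS : ∀ t : ℝ, 0 ≤ t → ‖S t‖ ≤ M * Real.exp (ω * t))
    (hT : ∀ t : ℝ, 0 ≤ t → ‖T t‖ ≤ MQ * Real.exp (ωQ * t))
    (Tf : ℝ) (hTf : 0 < Tf) (p : ℕ) (hp : 1 ≤ p)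
    (A₁ A₂ : ℝ) (hA₁ : A₁ = max 1 (Real.exp (Tf * (ω - ωQ))))
    (hA₂ : A₂ = max 1 (Real.exp (Tf * ωQ)))
    (v : E) (t : ℝ) (ht0 : 0 ≤ t) (htT : t ≤ Tf) :
    ‖∫ σ in (0:ℝ)..t, ((t - σ) ^ (p - 1) / (Nat.factorial (p - 1) : ℝ)) •
        (∫ s in (0:ℝ)..σ, P (S s (P (T (σ - s) v))))‖ ≤
      M * MQ * ‖P‖ ^ 2 * A₁ * A₂ * ‖v‖ * t ^ (p + 1) / (Nat.factorial (p + 1) : ℝ) :=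
  mz_H_model_accuracy_general P S T M MQ hM hMQ ω ωQ hS hT Tf p hp A₁ A₂ hA₁ hA₂ v t ht0 htT
end

section
/- Let δ > 0, C > 0 and T > 0 be real constants, let n ≥ 1 be an integer, and let α₁, …, α_n be positive real numbers. For 1 ≤ p ≤ n+1 define X_p := δ·p!/(C·∏_{j=1}^{p−1} α_j) (so X₁ = δ/C). If α_p < (p+1)·X_p^{−1/p} for all 1 ≤ p ≤ n, then X_{p+1}^{1/(p+1)} > X_p^{1/p} for all 1 ≤ p ≤ n; equivalently, the memory lengths Δt_p := T − X_{p+1}^{1/(p+1)} form a sequence satisfying Δt_p < Δt_{p−1} for 2 ≤ p ≤ n, i.e. T − [δ·(p+1)!/(C·∏_{j=1}^{p} α_j)]^{1/(p+1)} < T − [δ·p!/(C·∏_{j=1}^{p−1} α_j)]^{1/p}. -/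
/-!
Because `X_{p+1} = X_p (p+1)/α_p`, raising `X_p^{1/p} < X_{p+1}^{1/(p+1)}` to the power `p+1`
turns it into `X_p · X_p^{1/p} < X_p (p+1)/α_p`, which is the growth condition
`α_p X_p^{1/p} < p+1` multiplied by `X_p / α_p > 0`.
-/

open Finset Real

theorem rpow_one_div_lt_rpow_one_div_succ_of_lt {x a s : ℝ} (hx : 0 < x) (ha : 0 < a)
    (hs : 0 < s) (h : a < (s + 1) * x ^ (-1 / s)) :
    x ^ (1 / s) < (x * ((s + 1) / a)) ^ (1 / (s + 1)) := by
  set y := x ^ (1 / s) with hy_def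
  have hy : 0 < y := rpow_pos_of_pos hx _
  have hy_lt : y < (s + 1) / a := by
    rw [neg_div, rpow_neg hx.le, ← hy_def] at h
    rw [lt_div_iff₀ ha]
    calc y * a < y * ((s + 1) * y⁻¹) := mul_lt_mul_of_pos_left h hy
      _ = s + 1 := by field_simp
  have hy_pow : y ^ (s + 1) = x * y := by
    rw [hy_def, ← rpow_mul hx.le, show 1 / s * (s + 1) = 1 + 1 / s by field_simp,
      rpow_add hx, rpow_one]
  rw [one_div (s + 1), lt_rpow_inv_iff_of_pos hy.le (by positivity) (by positivity), hy_pow]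
  exact mul_lt_mul_of_pos_left hy_lt hx

theorem factorial_div_prod_Icc_succ (δ C : ℝ) (α : ℕ → ℝ) {p : ℕ} (hp : 1 ≤ p) :
    δ * ((p + 1).factorial : ℝ) / (C * ∏ j ∈ Icc 1 p, α j) =
      δ * (p.factorial : ℝ) / (C * ∏ j ∈ Icc 1 (p - 1), α j) * (((p : ℝ) + 1) / α p) := by
  obtain ⟨q, rfl⟩ : ∃ q, p = q + 1 := ⟨p - 1, by omega⟩
  rw [Nat.add_sub_cancel, prod_Icc_succ_top (by omega), Nat.factorial_succ (q + 1),
    ← mul_assoc C, ← mul_div_mul_comm]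
  push_cast
  ring_nf

theorem factorial_div_prod_Icc_pos {δ C : ℝ} (hδ : 0 < δ) (hC : 0 < C) {α : ℕ → ℝ} {n p : ℕ}
    (hα : ∀ j, 1 ≤ j → j ≤ n → 0 < α j) (hp : p ≤ n + 1) :
    0 < δ * (p.factorial : ℝ) / (C * ∏ j ∈ Icc 1 (p - 1), α j) := by
  have hprod : 0 < ∏ j ∈ Icc 1 (p - 1), α j :=
    prod_pos fun j hj ↦ hα j (mem_Icc.1 hj).1 (by have := (mem_Icc.1 hj).2; omega)
  positivity

theorem mz_type1_FMA_memory_lengths_ordered_general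
    (δ C T : ℝ) (hδ : 0 < δ) (hC : 0 < C)
    (n : ℕ) (α : ℕ → ℝ)
    (hαpos : ∀ j, 1 ≤ j → j ≤ n → 0 < α j)
    (X : ℕ → ℝ)
    (hX : ∀ p, 1 ≤ p →
      X p = δ * (Nat.factorial p : ℝ) / (C * ∏ j ∈ Finset.Icc 1 (p - 1), α j))
    (hcond : ∀ p, 1 ≤ p → p ≤ n → α p < ((p : ℝ) + 1) * X p ^ (-(1 : ℝ) / (p : ℝ)))
    (Δt : ℕ → ℝ)
    (hΔt : ∀ p, 1 ≤ p → Δt p = T - X (p + 1) ^ ((1 : ℝ) / ((p : ℝ) + 1))) :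
    (∀ p, 1 ≤ p → p ≤ n →
      X p ^ ((1 : ℝ) / (p : ℝ)) < X (p + 1) ^ ((1 : ℝ) / ((p : ℝ) + 1))) ∧
    (∀ p, 2 ≤ p → p ≤ n → Δt p < Δt (p - 1)) ∧
    (∀ p, 2 ≤ p → p ≤ n →
      T - (δ * (Nat.factorial (p + 1) : ℝ) /
            (C * ∏ j ∈ Finset.Icc 1 p, α j)) ^ ((1 : ℝ) / ((p : ℝ) + 1)) <
      T - (δ * (Nat.factorial p : ℝ) /
            (C * ∏ j ∈ Finset.Icc 1 (p - 1), α j)) ^ ((1 : ℝ) / (p : ℝ))) := by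
  have key : ∀ p, 1 ≤ p → p ≤ n →
      X p ^ ((1 : ℝ) / (p : ℝ)) < X (p + 1) ^ ((1 : ℝ) / ((p : ℝ) + 1)) := by
    intro p hp hpn
    have hXp : 0 < X p := hX p hp ▸ factorial_div_prod_Icc_pos hδ hC hαpos (by omega)
    rw [hX (p + 1) (by omega), Nat.add_sub_cancel, factorial_div_prod_Icc_succ δ C α hp, ← hX p hp]
    exact rpow_one_div_lt_rpow_one_div_succ_of_lt hXp (hαpos p hp hpn) (by positivity)
      (hcond p hp hpn)
  refine ⟨key, fun p hp hpn ↦ ?_, fun p hp hpn ↦ ?_⟩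
  · obtain ⟨q, rfl⟩ : ∃ q, p = q + 1 := ⟨p - 1, by omega⟩
    have h := key (q + 1) (by omega) hpn
    rw [hΔt (q + 1) (by omega), Nat.add_sub_cancel, hΔt q (by omega)]
    push_cast at h ⊢
    linarith
  · have h := key p (by omega) hpn
    rw [hX p (by omega), hX (p + 1) (by omega), Nat.add_sub_cancel] at h
    linarith

/-- **Uniform convergence of the Type-I FMA** (Corollary 3.9, arithmetic
content). With `X_p = δ p! / (C ∏_{j=1}^{p-1} α_j)`, the growth condition
`α_p < (p+1) X_p^{-1/p}` forces `X_{p+1}^{1/(p+1)} > X_p^{1/p}`; equivalently,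
the threshold memory lengths `Δt_p = T - X_{p+1}^{1/(p+1)}` satisfy
`Δt_p < Δt_{p-1}`. -/
theorem mz_type1_FMA_memory_lengths_ordered
    (δ C T : ℝ) (hδ : 0 < δ) (hC : 0 < C) (hT : 0 < T)
    (n : ℕ) (hn : 1 ≤ n) (α : ℕ → ℝ)
    (hαpos : ∀ j, 1 ≤ j → j ≤ n → 0 < α j)
    (X : ℕ → ℝ)
    (hX : ∀ p, 1 ≤ p →
      X p = δ * (Nat.factorial p : ℝ) / (C * ∏ j ∈ Finset.Icc 1 (p - 1), α j))
    (hcond : ∀ p, 1 ≤ p → p ≤ n → α p < ((p : ℝ) + 1) * X p ^ (-(1 : ℝ) / (p : ℝ)))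
    (Δt : ℕ → ℝ)
    (hΔt : ∀ p, 1 ≤ p → Δt p = T - X (p + 1) ^ ((1 : ℝ) / ((p : ℝ) + 1))) :
    (∀ p, 1 ≤ p → p ≤ n →
      X p ^ ((1 : ℝ) / (p : ℝ)) < X (p + 1) ^ ((1 : ℝ) / ((p : ℝ) + 1))) ∧
    (∀ p, 2 ≤ p → p ≤ n → Δt p < Δt (p - 1)) ∧
    (∀ p, 2 ≤ p → p ≤ n →
      T - (δ * (Nat.factorial (p + 1) : ℝ) /
            (C * ∏ j ∈ Finset.Icc 1 p, α j)) ^ ((1 : ℝ) / ((p : ℝ) + 1)) <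
      T - (δ * (Nat.factorial p : ℝ) /
            (C * ∏ j ∈ Finset.Icc 1 (p - 1), α j)) ^ ((1 : ℝ) / (p : ℝ))) :=
  mz_type1_FMA_memory_lengths_ordered_general δ C T hδ hC n α hαpos X hX hcond Δt hΔt
end

section
/- Let E be a real Banach space, P : E → E a continuous linear map, S, T : ℝ → (E → E) two families of continuous linear operators such that for every x ∈ E the maps t ↦ S(t)x and t ↦ T(t)x are continuous, and suppose there are constants M, M_Q > 0 and ω, ω_Q ∈ ℝ with ‖S(t)‖ ≤ M·exp(ω·t) and ‖T(t)‖ ≤ M_Q·exp(ω_Q·t) for all t ≥ 0. Fix an integer p ≥ 1 and a cutoff time t_p ≥ 0. Then for every v ∈ E and every t ≥ 0, the error of the Type-II finite memory approximation satisfies ‖∫₀ᵗ ((t−σ)^{p−1}/(p−1)!) · (∫₀^{min(σ, t_p)} P(S(s)(P(T(σ−s)v))) ds) dσ‖ ≤ M·M_Q·‖P‖²·‖v‖·f_p(ω_Q, t)·h(ω − ω_Q, t_p), where f_p(ω_Q, t) = ∫₀ᵗ ((t−σ)^{p−1}/(p−1)!)·exp(ω_Q·σ) dσ and h(a, τ)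 = ∫₀^τ exp(a·s) ds (so h(a, τ) = τ if a = 0 and h(a, τ) = (exp(a·τ) − 1)/a if a ≠ 0). -/
open MeasureTheory intervalIntegral Filter

/-!
For `0 ≤ s ≤ σ` the integrand `P S(s) P T(σ - s) v` has norm at most
`M MQ ‖P‖² ‖v‖ e^{ωQ σ} e^{(ω - ωQ) s}`. Integrating in `s` over `[0, min σ tp] ⊆ [0, tp]`
bounds the inner integral by `M MQ ‖P‖² ‖v‖ e^{ωQ σ} h(ω - ωQ, tp)`, and integrating this
against the nonnegative Cauchy kernel `(t - σ)^{p-1}/(p-1)!` produces `f_p(ωQ, t)`.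
-/

theorem norm_apply_comp_apply_le {E : Type*} [NormedAddCommGroup E] [NormedSpace ℝ E]
    (P A B : E →L[ℝ] E) (v : E) :
    ‖P (A (P (B v)))‖ ≤ ‖P‖ ^ 2 * (‖A‖ * ‖B‖) * ‖v‖ :=
  calc ‖P (A (P (B v)))‖ ≤ ‖P‖ * (‖A‖ * (‖P‖ * (‖B‖ * ‖v‖))) :=
        P.le_opNorm_of_le (A.le_opNorm_of_le (P.le_opNorm_of_le (B.le_opNorm v)))
    _ = ‖P‖ ^ 2 * (‖A‖ * ‖B‖) * ‖v‖ := by ring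

theorem exp_mul_exp_mul_sub (ω ωQ s σ : ℝ) :
    Real.exp (ω * s) * Real.exp (ωQ * (σ - s)) = Real.exp (ωQ * σ) * Real.exp ((ω - ωQ) * s) := by
  rw [← Real.exp_add, ← Real.exp_add]
  ring_nf

theorem integral_exp_mul_mono_interval (a : ℝ) {m τ : ℝ} (hm : 0 ≤ m) (hmτ : m ≤ τ) :
    ∫ s in (0:ℝ)..m, Real.exp (a * s) ≤ ∫ s in (0:ℝ)..τ, Real.exp (a * s) :=
  integral_mono_interval le_rfl hm hmτ (Eventually.of_forall fun _ => (Real.exp_pos _).le)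
    ((by fun_prop : Continuous fun s : ℝ => Real.exp (a * s)).intervalIntegrable _ _)

theorem nonneg_of_norm_le_mul_exp {F : Type*} [SeminormedAddCommGroup F] {S : ℝ → F}
    {M ω : ℝ} (hS : ∀ t : ℝ, 0 ≤ t → ‖S t‖ ≤ M * Real.exp (ω * t)) : 0 ≤ M := by
  simpa using (norm_nonneg _).trans (hS 0 le_rfl)

section MemoryIntegral

variable {E : Type*} [NormedAddCommGroup E] [NormedSpace ℝ E]
  (P : E →L[ℝ] E) {S T : ℝ → (E →L[ℝ] E)} {M MQ ω ωQ : ℝ}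

theorem norm_memory_integrand_le
    (hS : ∀ t : ℝ, 0 ≤ t → ‖S t‖ ≤ M * Real.exp (ω * t))
    (hT : ∀ t : ℝ, 0 ≤ t → ‖T t‖ ≤ MQ * Real.exp (ωQ * t))
    (v : E) {s σ : ℝ} (hs : 0 ≤ s) (hsσ : s ≤ σ) :
    ‖P (S s (P (T (σ - s) v)))‖ ≤
      M * MQ * ‖P‖ ^ 2 * ‖v‖ * Real.exp (ωQ * σ) * Real.exp ((ω - ωQ) * s) := by
  have hST : ‖S s‖ * ‖T (σ - s)‖ ≤ M * Real.exp (ω * s) * (MQ * Real.exp (ωQ * (σ - s))) :=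
    mul_le_mul (hS s hs) (hT _ (sub_nonneg.2 hsσ)) (norm_nonneg _)
      ((norm_nonneg _).trans (hS s hs))
  calc ‖P (S s (P (T (σ - s) v)))‖ ≤ ‖P‖ ^ 2 * (‖S s‖ * ‖T (σ - s)‖) * ‖v‖ :=
        norm_apply_comp_apply_le P _ _ v
    _ ≤ ‖P‖ ^ 2 * (M * Real.exp (ω * s) * (MQ * Real.exp (ωQ * (σ - s)))) * ‖v‖ := by gcongr
    _ = M * MQ * ‖P‖ ^ 2 * ‖v‖ * (Real.exp (ω * s) * Real.exp (ωQ * (σ - s))) := by ring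
    _ = _ := by rw [exp_mul_exp_mul_sub]; ring

theorem norm_truncated_memory_integral_le
    (hS : ∀ t : ℝ, 0 ≤ t → ‖S t‖ ≤ M * Real.exp (ω * t))
    (hT : ∀ t : ℝ, 0 ≤ t → ‖T t‖ ≤ MQ * Real.exp (ωQ * t))
    {tp : ℝ} (htp : 0 ≤ tp) (v : E) {σ : ℝ} (hσ : 0 ≤ σ) :
    ‖∫ s in (0:ℝ)..(min σ tp), P (S s (P (T (σ - s) v)))‖ ≤
      M * MQ * ‖P‖ ^ 2 * ‖v‖ * Real.exp (ωQ * σ) *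
        ∫ s in (0:ℝ)..tp, Real.exp ((ω - ωQ) * s) := by
  have hm : 0 ≤ min σ tp := le_min hσ htp
  calc ‖∫ s in (0:ℝ)..(min σ tp), P (S s (P (T (σ - s) v)))‖
      ≤ ∫ s in (0:ℝ)..(min σ tp),
          M * MQ * ‖P‖ ^ 2 * ‖v‖ * Real.exp (ωQ * σ) * Real.exp ((ω - ωQ) * s) := by
        refine intervalIntegral.norm_integral_le_of_norm_le hm
          (Eventually.of_forall fun s hs => ?_) (Continuous.intervalIntegrable (by fun_prop) _ _)
        exact norm_memory_integrand_le P hS hT v hs.1.le (hs.2.trans (min_le_left _ _))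
    _ = M * MQ * ‖P‖ ^ 2 * ‖v‖ * Real.exp (ωQ * σ) *
          ∫ s in (0:ℝ)..(min σ tp), Real.exp ((ω - ωQ) * s) :=
        intervalIntegral.integral_const_mul _ _
    _ ≤ _ := by
        have hM := nonneg_of_norm_le_mul_exp hS
        have hMQ := nonneg_of_norm_le_mul_exp hT
        have hK : 0 ≤ M * MQ * ‖P‖ ^ 2 * ‖v‖ * Real.exp (ωQ * σ) := by positivity
        exact mul_le_mul_of_nonneg_left
          (integral_exp_mul_mono_interval _ hm (min_le_right _ _)) hK

end MemoryIntegral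

theorem mz_type2_FMA_accuracy_general
    {E : Type*} [NormedAddCommGroup E] [NormedSpace ℝ E]
    (P : E →L[ℝ] E) (S T : ℝ → (E →L[ℝ] E))
    (M MQ : ℝ) (ω ωQ : ℝ)
    (hS : ∀ t : ℝ, 0 ≤ t → ‖S t‖ ≤ M * Real.exp (ω * t))
    (hT : ∀ t : ℝ, 0 ≤ t → ‖T t‖ ≤ MQ * Real.exp (ωQ * t))
    (p : ℕ) (tp : ℝ) (htp : 0 ≤ tp)
    (v : E) (t : ℝ) (ht : 0 ≤ t) :
    ‖∫ σ in (0:ℝ)..t, ((t - σ) ^ (p - 1) / (Nat.factorial (p - 1) : ℝ)) •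
        (∫ s in (0:ℝ)..(min σ tp), P (S s (P (T (σ - s) v))))‖ ≤
      M * MQ * ‖P‖ ^ 2 * ‖v‖ *
        (∫ σ in (0:ℝ)..t, (t - σ) ^ (p - 1) / (Nat.factorial (p - 1) : ℝ) *
          Real.exp (ωQ * σ)) *
        (∫ s in (0:ℝ)..tp, Real.exp ((ω - ωQ) * s)) := by
  set C := M * MQ * ‖P‖ ^ 2 * ‖v‖
  set H := ∫ s in (0:ℝ)..tp, Real.exp ((ω - ωQ) * s)
  calc _ ≤ ∫ σ in (0:ℝ)..t, (t - σ) ^ (p - 1) / (Nat.factorial (p - 1) : ℝ) *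
          (C * Real.exp (ωQ * σ) * H) := by
        refine intervalIntegral.norm_integral_le_of_norm_le ht
          (Eventually.of_forall fun σ hσ => ?_) (Continuous.intervalIntegrable (by fun_prop) _ _)
        have hkernel : 0 ≤ (t - σ) ^ (p - 1) / (Nat.factorial (p - 1) : ℝ) :=
          div_nonneg (pow_nonneg (sub_nonneg.2 hσ.2) _) (Nat.cast_nonneg _)
        rw [norm_smul, Real.norm_of_nonneg hkernel]
        exact mul_le_mul_of_nonneg_left
          (norm_truncated_memory_integral_le P hS hT htp v hσ.1.le) hkernel
    _ = _ := by
        rw [mul_right_comm, ← intervalIntegral.integral_const_mul]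
        congr 1 with σ
        ring

/-- **Accuracy of the Type-II finite memory approximation** (Theorem 3.10,
abstract form). Bound on the error of the Type-II FMA of the Mori–Zwanzig
memory integral, in terms of `f_p(ωQ,t) = ∫₀ᵗ (t-σ)^{p-1}/(p-1)! e^{ωQ σ} dσ`
and `h(a,τ) = ∫₀^τ e^{a s} ds`. -/
theorem mz_type2_FMA_accuracy
    {E : Type*} [NormedAddCommGroup E] [NormedSpace ℝ E] [CompleteSpace E]
    (P : E →L[ℝ] E) (S T : ℝ → (E →L[ℝ] E))
    (hScont : ∀ x : E, Continuous fun t : ℝ => S t x)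
    (hTcont : ∀ x : E, Continuous fun t : ℝ => T t x)
    (M MQ : ℝ) (hM : 0 < M) (hMQ : 0 < MQ) (ω ωQ : ℝ)
    (hS : ∀ t : ℝ, 0 ≤ t → ‖S t‖ ≤ M * Real.exp (ω * t))
    (hT : ∀ t : ℝ, 0 ≤ t → ‖T t‖ ≤ MQ * Real.exp (ωQ * t))
    (p : ℕ) (hp : 1 ≤ p) (tp : ℝ) (htp : 0 ≤ tp)
    (v : E) (t : ℝ) (ht : 0 ≤ t) :
    ‖∫ σ in (0:ℝ)..t, ((t - σ) ^ (p - 1) / (Nat.factorial (p - 1) : ℝ)) •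
        (∫ s in (0:ℝ)..(min σ tp), P (S s (P (T (σ - s) v))))‖ ≤
      M * MQ * ‖P‖ ^ 2 * ‖v‖ *
        (∫ σ in (0:ℝ)..t, (t - σ) ^ (p - 1) / (Nat.factorial (p - 1) : ℝ) *
          Real.exp (ωQ * σ)) *
        (∫ s in (0:ℝ)..tp, Real.exp ((ω - ωQ) * s)) :=
  mz_type2_FMA_accuracy_general P S T M MQ ω ωQ hS hT p tp htp v t ht
end

section
/- Let H be a complex Hilbert space, A : H → H a continuous linear operator, and ω ∈ ℝ a constant such that the real part of ⟪u, A u⟫ is at most ω·‖u‖² for every u ∈ H (i.e., ω bounds the numerical abscissa of A). Then for every t ≥ 0 one has ‖exp(t·A)‖ ≤ exp(ω·t). -/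
/-!
Along a trajectory `u(t) = e^{tA} u₀` one has
`d/dt ‖u‖² = 2 Re⟪u, A u⟫ ≤ 2ω ‖u‖²`, so Grönwall's inequality gives `‖u(t)‖ ≤ e^{ωt} ‖u₀‖`.
-/

open NormedSpace Set

theorem norm_le_mul_exp_of_re_inner_deriv_le {E : Type*} [NormedAddCommGroup E]
    [InnerProductSpace ℂ E] {f f' : ℝ → E} {ω t : ℝ} (ht : 0 ≤ t)
    (hf : ∀ r ∈ Icc 0 t, HasDerivAt f (f' r) r)
    (hbound : ∀ r ∈ Ico 0 t, (inner ℂ (f r) (f' r)).re ≤ ω * ‖f r‖ ^ 2) :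
    ‖f t‖ ≤ ‖f 0‖ * Real.exp (ω * t) := by
  let _ : InnerProductSpace ℝ E := InnerProductSpace.complexToReal
  have hsq : ∀ r ∈ Icc 0 t,
      HasDerivAt (‖f ·‖ ^ 2) (2 * (inner ℂ (f r) (f' r)).re) r := fun r hr => by
    simpa only [real_inner_eq_re_inner, RCLike.re_to_complex] using (hf r hr).norm_sq
  have hgronwall :=
    le_gronwallBound_of_liminf_deriv_right_le (δ := ‖f 0‖ ^ 2) (K := 2 * ω) (ε := 0)
    (fun r hr => (hsq r hr).continuousAt.continuousWithinAt)
    (fun r hr _ hlt =>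
      (hsq r (Ico_subset_Icc_self hr)).hasDerivWithinAt.liminf_right_slope_le hlt)
    le_rfl (fun r hr => by linarith [hbound r hr]) t ⟨ht, le_rfl⟩
  rw [gronwallBound_ε0, sub_zero] at hgronwall
  refine (pow_le_pow_iff_left₀ (norm_nonneg _) (by positivity) two_ne_zero).1 ?_
  calc ‖f t‖ ^ 2 ≤ ‖f 0‖ ^ 2 * Real.exp (2 * ω * t) := hgronwall
    _ = (‖f 0‖ * Real.exp (ω * t)) ^ 2 := by rw [mul_pow, ← Real.exp_nat_mul]; ring_nf

theorem hasDerivAt_exp_smul_apply {E : Type*} [NormedAddCommGroup E] [NormedSpace ℂ E]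
    [CompleteSpace E] (A : E →L[ℂ] E) (u : E) (r : ℝ) :
    HasDerivAt (fun s : ℝ => exp ((s : ℂ) • A) u) (A (exp ((r : ℂ) • A) u)) r := by
  simp only [Complex.coe_smul]
  exact ((ContinuousLinearMap.apply ℂ E u).restrictScalars ℝ).hasFDerivAt.comp_hasDerivAt r
    (hasDerivAt_exp_smul_const' A r)

/-- **Semigroup estimate via the numerical abscissa** (equation (19)). If the
numerical abscissa of the bounded operator `A` is at most `ω`, i.e.
`Re⟪u, A u⟫ ≤ ω ‖u‖²` for all `u`, then `‖e^{tA}‖ ≤ e^{ωt}` for all `t ≥ 0`. -/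
theorem semigroup_bound_of_numerical_abscissa
    {H : Type*} [NormedAddCommGroup H] [InnerProductSpace ℂ H] [CompleteSpace H]
    (A : H →L[ℂ] H) (ω : ℝ)
    (hω : ∀ u : H, (inner ℂ u (A u) : ℂ).re ≤ ω * ‖u‖ ^ 2)
    (t : ℝ) (ht : 0 ≤ t) :
    ‖NormedSpace.exp ((t : ℂ) • A)‖ ≤ Real.exp (ω * t) := by
  refine ContinuousLinearMap.opNorm_le_bound _ (Real.exp_pos _).le fun u => ?_
  have htrajectory := norm_le_mul_exp_of_re_inner_deriv_le ht
    (fun r _ => hasDerivAt_exp_smul_apply A u r) (fun r _ => hω _)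
  simpa [mul_comm] using htrajectory
end

section
/- Let H be a complex Hilbert space, L : H → H a continuous linear operator that is skew-adjoint (its adjoint equals −L), and Q : H → H a continuous linear operator that is an orthogonal projection (Q is self-adjoint and Q ∘ Q = Q). Then the semigroup generated by Q ∘ L ∘ Q is contractive: for every t ≥ 0 one has ‖exp(t·(Q ∘ L ∘ Q))‖ ≤ 1. -/
open ContinuousLinearMap

/-!
`t • QLQ` is skew-adjoint whenever `L` is skew-adjoint and `Q` is self-adjoint, since
`QLQ = Q L Q⋆` is a conjugate of `L`. The exponential of a skew-adjoint element of a
C⋆-algebra is unitary, and unitaries have norm at most one.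
-/

theorem CStarRing.norm_le_one_of_mem_unitary {E : Type*} [NormedRing E] [StarRing E]
    [CStarRing E] {U : E} (hU : U ∈ unitary E) : ‖U‖ ≤ 1 := by
  rcases subsingleton_or_nontrivial E with hE | hE
  · simp [Subsingleton.elim U 0]
  · exact (CStarRing.norm_of_mem_unitary hU).le

theorem NormedSpace.norm_exp_le_one_of_mem_skewAdjoint {A : Type*} [NormedRing A]
    [NormedAlgebra ℚ A] [CompleteSpace A] [StarRing A] [CStarRing A] {a : A}
    (ha : a ∈ skewAdjoint A) : ‖NormedSpace.exp a‖ ≤ 1 :=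
  CStarRing.norm_le_one_of_mem_unitary (NormedSpace.exp_mem_unitary_of_mem_skewAdjoint ha)

theorem ContinuousLinearMap.comp_comp_mem_skewAdjoint {𝕜 H : Type*} [RCLike 𝕜]
    [NormedAddCommGroup H] [InnerProductSpace 𝕜 H] [CompleteSpace H] {L Q : H →L[𝕜] H}
    (hL : L ∈ skewAdjoint (H →L[𝕜] H)) (hQ : IsSelfAdjoint Q) :
    Q ∘L L ∘L Q ∈ skewAdjoint (H →L[𝕜] H) := by
  have h := skewAdjoint.conjugate hL Q
  rwa [hQ.star_eq, mul_assoc] at h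

theorem orthogonal_dynamics_semigroup_contractive_general
    {H : Type*} [NormedAddCommGroup H] [InnerProductSpace ℂ H] [CompleteSpace H]
    (L Q : H →L[ℂ] H)
    (hL : ContinuousLinearMap.adjoint L = -L)
    (hQadj : ContinuousLinearMap.adjoint Q = Q)
    (t : ℝ) :
    ‖NormedSpace.exp ((t : ℂ) • (Q ∘L L ∘L Q))‖ ≤ 1 := by
  let : NormedAlgebra ℚ (H →L[ℂ] H) := .restrictScalars ℚ ℂ (H →L[ℂ] H)
  have hQLQ : Q ∘L L ∘L Q ∈ skewAdjoint (H →L[ℂ] H) :=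
    comp_comp_mem_skewAdjoint (skewAdjoint.mem_iff.mpr hL) hQadj
  rw [Complex.coe_smul]
  exact NormedSpace.norm_exp_le_one_of_mem_skewAdjoint (skewAdjoint.smul_mem t hQLQ)

/-- **Contractivity of the orthogonal-dynamics semigroup** (equation (20) for
Hamiltonian systems). If `L` is skew-adjoint and `Q` is an orthogonal
projection, then the semigroup generated by `Q L Q` is contractive:
`‖e^{t QLQ}‖ ≤ 1` for all `t ≥ 0`. -/
theorem orthogonal_dynamics_semigroup_contractive
    {H : Type*} [NormedAddCommGroup H] [InnerProductSpace ℂ H] [CompleteSpace H]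
    (L Q : H →L[ℂ] H)
    (hL : ContinuousLinearMap.adjoint L = -L)
    (hQadj : ContinuousLinearMap.adjoint Q = Q)
    (hQproj : Q ∘L Q = Q)
    (t : ℝ) (ht : 0 ≤ t) :
    ‖NormedSpace.exp ((t : ℂ) • (Q ∘L L ∘L Q))‖ ≤ 1 :=
  orthogonal_dynamics_semigroup_contractive_general L Q hL hQadj t
end

section
/- Let E be a real Banach space, P : E → E a continuous linear map, T : ℝ → (E → E) a family of continuous linear operators such that for every x ∈ E the map t ↦ T(t)x is continuous, with constants M_Q > 0 and ω_Q ∈ ℝ satisfying ‖T(t)‖ ≤ M_Q·exp(ω_Q·t) for all t ≥ 0. Let T_f > 0 be a fixed final time, let q ≥ 1 be an integer, set A₂ = max(1, exp(T_f·ω_Q)), let h : ℝ → E be a continuous function, and let D ≥ 0 satisfy ‖h(s)‖ ≤ D for all s ∈ [0, T_f]. Then for every t ∈ [0, T_f], the q-th order H-model truncation error of the PDF-space memory integral satisfies ‖∫₀ᵗ ((t−σ)^{q−1}/(q−1)!) · (∫₀^σ P(T(σ−s)(h(s))) ds) dσ‖ ≤ ‖P‖·M_Q·A₂·D·t^{q+1}/(q+1)!.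 -/
/-!
Since `A₂ = max 1 (exp (T_f ω_Q))` dominates `exp (ω_Q u)` on `[0, T_f]` whatever the sign of
`ω_Q`, the memory integrand `P (T (σ - s) (h s))` is bounded by `‖P‖ M_Q A₂ D` on the triangle
`0 ≤ s ≤ σ ≤ T_f`. So the inner integral is at most that constant times `σ`, and integrating `σ`
against the Cauchy kernel `(t - σ)^(q-1) / (q-1)!` gives `t^(q+1) / (q+1)!`.
-/

open MeasureTheory intervalIntegral Filter
open scoped Nat

theorem Real.exp_mul_le_max_one_exp_mul {ω T u : ℝ} (hu : u ∈ Set.Icc 0 T) :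
    Real.exp (ω * u) ≤ max 1 (Real.exp (T * ω)) := by
  obtain ⟨hu0, huT⟩ := hu
  rcases le_total 0 ω with hω | hω
  · exact le_max_of_le_right (Real.exp_le_exp.mpr (by nlinarith))
  · exact le_max_of_le_left (Real.exp_le_one_iff.mpr (by nlinarith))

theorem norm_le_mul_max_one_exp_of_norm_le_mul_exp {F : Type*} [SeminormedAddCommGroup F]
    {T : ℝ → F} {M ω : ℝ} (hT : ∀ t : ℝ, 0 ≤ t → ‖T t‖ ≤ M * Real.exp (ω * t))
    {Tf u : ℝ} (hu : u ∈ Set.Icc 0 Tf) :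
    ‖T u‖ ≤ M * max 1 (Real.exp (Tf * ω)) := by
  have hM : 0 ≤ M :=
    nonneg_of_mul_nonneg_left ((norm_nonneg _).trans (hT u hu.1)) (Real.exp_pos _)
  exact (hT u hu.1).trans
    (mul_le_mul_of_nonneg_left (Real.exp_mul_le_max_one_exp_mul hu) hM)

theorem norm_integral_clm_apply_clm_apply_sub_le {E : Type*} [NormedAddCommGroup E]
    [NormedSpace ℝ E] (P : E →L[ℝ] E) {T : ℝ → (E →L[ℝ] E)} {h : ℝ → E} {K D σ : ℝ}
    (hσ : 0 ≤ σ) (hT : ∀ u ∈ Set.Icc 0 σ, ‖T u‖ ≤ K) (hh : ∀ s ∈ Set.Icc 0 σ, ‖h s‖ ≤ D) :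
    ‖∫ s in (0 : ℝ)..σ, P (T (σ - s) (h s))‖ ≤ ‖P‖ * K * D * σ := by
  have hbound : ∀ s ∈ Set.uIoc 0 σ, ‖P (T (σ - s) (h s))‖ ≤ ‖P‖ * K * D := by
    intro s hs
    obtain ⟨hs0, hsσ⟩ := Set.Ioc_subset_Icc_self (Set.uIoc_of_le hσ ▸ hs)
    calc ‖P (T (σ - s) (h s))‖ ≤ ‖P‖ * (‖T (σ - s)‖ * ‖h s‖) :=
          P.le_opNorm_of_le ((T (σ - s)).le_opNorm _)
      _ ≤ ‖P‖ * (K * D) := by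
          have hK : 0 ≤ K := (norm_nonneg _).trans (hT 0 ⟨le_rfl, hσ⟩)
          gcongr
          · exact hT _ ⟨by linarith, by linarith⟩
          · exact hh s ⟨hs0, hsσ⟩
      _ = ‖P‖ * K * D := by ring
  simpa [abs_of_nonneg hσ] using norm_integral_le_of_norm_le_const hbound

theorem integral_pow_sub_div_factorial_mul_self (r : ℕ) (t : ℝ) :
    ∫ σ in (0 : ℝ)..t, (t - σ) ^ r / r ! * σ = t ^ (r + 2) / (r + 2)! := by
  have hsubst := integral_comp_sub_left (fun u : ℝ => u ^ r / r ! * (t - u)) t (a := 0) (b := t)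
  simp only [sub_sub_cancel, sub_self, sub_zero] at hsubst
  have hexpand : ∀ u : ℝ, u ^ r / r ! * (t - u) = t / r ! * u ^ r - 1 / r ! * u ^ (r + 1) := by
    intro u; ring
  simp_rw [hsubst, hexpand]
  rw [intervalIntegral.integral_sub, intervalIntegral.integral_const_mul,
    intervalIntegral.integral_const_mul, integral_pow, integral_pow]
  · push_cast [Nat.factorial_succ]
    field_simp
    ring
  all_goals exact (by fun_prop : Continuous _).intervalIntegrable _ _

theorem norm_integral_pow_sub_div_factorial_smul_le {E : Type*} [NormedAddCommGroup E]
    [NormedSpace ℝ E] {g : ℝ → E} {C t : ℝ} (r : ℕ) (ht : 0 ≤ t)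
    (hg : ∀ σ ∈ Set.Ioc 0 t, ‖g σ‖ ≤ C * σ) :
    ‖∫ σ in (0 : ℝ)..t, ((t - σ) ^ r / r !) • g σ‖ ≤ C * t ^ (r + 2) / (r + 2)! := by
  have hkernel : ∀ σ ∈ Set.Ioc 0 t,
      ‖((t - σ) ^ r / r !) • g σ‖ ≤ C * ((t - σ) ^ r / r ! * σ) := by
    intro σ hσ
    have hnonneg : 0 ≤ (t - σ) ^ r / r ! := by
      have := hσ.2
      positivity
    rw [norm_smul, Real.norm_of_nonneg hnonneg]
    nlinarith [hg σ hσ]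
  calc ‖∫ σ in (0 : ℝ)..t, ((t - σ) ^ r / r !) • g σ‖
      ≤ ∫ σ in (0 : ℝ)..t, C * ((t - σ) ^ r / r ! * σ) :=
        norm_integral_le_of_norm_le ht (Eventually.of_forall hkernel)
          ((by fun_prop : Continuous _).intervalIntegrable _ _)
    _ = C * t ^ (r + 2) / (r + 2)! := by
        rw [intervalIntegral.integral_const_mul, integral_pow_sub_div_factorial_mul_self,
          mul_div_assoc]

theorem mz_pdf_H_model_accuracy_general
    {E : Type*} [NormedAddCommGroup E] [NormedSpace ℝ E]
    (P : E →L[ℝ] E) (T : ℝ → (E →L[ℝ] E))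
    (MQ : ℝ) (ωQ : ℝ)
    (hT : ∀ t : ℝ, 0 ≤ t → ‖T t‖ ≤ MQ * Real.exp (ωQ * t))
    (Tf : ℝ) (q : ℕ) (hq : 1 ≤ q)
    (A₂ : ℝ) (hA₂ : A₂ = max 1 (Real.exp (Tf * ωQ)))
    (h : ℝ → E)
    (D : ℝ)
    (hhb : ∀ s ∈ Set.Icc (0 : ℝ) Tf, ‖h s‖ ≤ D)
    (t : ℝ) (ht : t ∈ Set.Icc (0 : ℝ) Tf) :
    ‖∫ σ in (0:ℝ)..t, ((t - σ) ^ (q - 1) / (Nat.factorial (q - 1) : ℝ)) •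
        (∫ s in (0:ℝ)..σ, P (T (σ - s) (h s)))‖ ≤
      ‖P‖ * MQ * A₂ * D * t ^ (q + 1) / (Nat.factorial (q + 1) : ℝ) := by
  obtain ⟨r, rfl⟩ : ∃ r, q = r + 1 := ⟨q - 1, (Nat.succ_pred_eq_of_pos hq).symm⟩
  subst hA₂
  refine norm_integral_pow_sub_div_factorial_smul_le r ht.1 fun σ hσ => ?_
  have hσTf : Set.Icc 0 σ ⊆ Set.Icc 0 Tf := Set.Icc_subset_Icc_right (hσ.2.trans ht.2)
  rw [mul_assoc ‖P‖ MQ]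
  exact norm_integral_clm_apply_clm_apply_sub_le P hσ.1.le
    (fun u hu => norm_le_mul_max_one_exp_of_norm_le_mul_exp hT (hσTf hu))
    (fun s hs => hhb s (hσTf hs))

/-- **Accuracy of the H-model in PDF space** (Theorem B.3, abstract form).
Bound on the q-th order H-model truncation error of the PDF-space Mori–Zwanzig
memory integral, written via Cauchy's formula for repeated integration. -/
theorem mz_pdf_H_model_accuracy
    {E : Type*} [NormedAddCommGroup E] [NormedSpace ℝ E] [CompleteSpace E]
    (P : E →L[ℝ] E) (T : ℝ → (E →L[ℝ] E))
    (hTcont : ∀ x : E, Continuous fun t : ℝ => T t x)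
    (MQ : ℝ) (hMQ : 0 < MQ) (ωQ : ℝ)
    (hT : ∀ t : ℝ, 0 ≤ t → ‖T t‖ ≤ MQ * Real.exp (ωQ * t))
    (Tf : ℝ) (hTf : 0 < Tf) (q : ℕ) (hq : 1 ≤ q)
    (A₂ : ℝ) (hA₂ : A₂ = max 1 (Real.exp (Tf * ωQ)))
    (h : ℝ → E) (hh : Continuous h)
    (D : ℝ) (hD : 0 ≤ D)
    (hhb : ∀ s ∈ Set.Icc (0 : ℝ) Tf, ‖h s‖ ≤ D)
    (t : ℝ) (ht : t ∈ Set.Icc (0 : ℝ) Tf) :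
    ‖∫ σ in (0:ℝ)..t, ((t - σ) ^ (q - 1) / (Nat.factorial (q - 1) : ℝ)) •
        (∫ s in (0:ℝ)..σ, P (T (σ - s) (h s)))‖ ≤
      ‖P‖ * MQ * A₂ * D * t ^ (q + 1) / (Nat.factorial (q + 1) : ℝ) :=
  mz_pdf_H_model_accuracy_general P T MQ ωQ hT Tf q hq A₂ hA₂ h D hhb t ht
end
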